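/- arXiv:2009.11767 — 2 statements merged into one kernel-verified Lean document; each statement's English description precedes it below -/
import Mathlib

section
/- For 1 ≤ r ≤ n, (1/2^{2n}) · Σ_{j=1}^{r} (1/(2j-1))·C(2j-1, j) · (1/(2n+1-2j))·C(2n+1-2j, n+1-j) = (1/2^{2n+1})·C(2n,n)·(1/(n+1))·(1 + ((2r-n)/n)·C(2r,r)·C(2n-2r,n-r)/C(2n,n)). -/
/-!
Both quotients of binomial coefficients in the sum are Catalan numbers,
`C(2k-1, k)/(2k-1) = Cat (k-1)`, so the left side is `4⁻ⁿ` times the partial convolution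
`∑_{i<r} Cat i * Cat (n-1-i)`, whose full value `Cat n` is Segner's recurrence. The closed
form for the partial sums follows by induction on `r`: once every central binomial coefficient
is written through `centralBinom k = (k+1) Cat k` and `centralBinom (k+1) = 2(2k+1) Cat k`,
the increment is a polynomial identity.
-/

open Finset Nat

theorem choose_two_mul_add_one_succ_eq_mul_catalan (m : ℕ) :
    (2 * m + 1).choose (m + 1) = (2 * m + 1) * catalan m := by
  have h := add_one_mul_choose_eq (2 * m) m
  rw [← centralBinom_eq_two_mul_choose, ← succ_mul_catalan_eq_centralBinom] at h
  apply Nat.eq_of_mul_eq_mul_right m.succ_pos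
  linarith

theorem centralBinom_succ_eq_mul_catalan (m : ℕ) :
    centralBinom (m + 1) = 2 * (2 * m + 1) * catalan m := by
  have h := succ_mul_centralBinom_succ m
  rw [← succ_mul_catalan_eq_centralBinom m] at h
  apply Nat.eq_of_mul_eq_mul_left m.succ_pos
  linarith

theorem mul_sum_range_catalan_mul_catalan (m r : ℕ) (hr : r ≤ m + 1) :
    2 * (m + 1) * (m + 2) * ∑ i ∈ range r, (catalan i * catalan (m - i) : ℤ)
      = (m + 1) * centralBinom (m + 1)
        + (2 * r - m - 1) * centralBinom r * centralBinom (m + 1 - r) := by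
  induction r with
  | zero =>
    simp only [range_zero, sum_empty, mul_zero, CharP.cast_eq_zero, centralBinom_zero, cast_one,
      mul_one, tsub_zero]
    ring
  | succ r ih =>
    obtain ⟨s, rfl⟩ : ∃ s, m = r + s := ⟨m - r, by omega⟩
    rw [sum_range_succ, mul_add, ih (by omega), show r + s + 1 - r = s + 1 by omega,
      show r + s + 1 - (r + 1) = s by omega, show r + s - r = s by omega]
    simp only [centralBinom_succ_eq_mul_catalan, ← succ_mul_catalan_eq_centralBinom]
    push_cast
    ring

theorem one_div_mul_choose_eq_catalan (k : ℕ) (hk : 1 ≤ k) :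
    1 / (2 * (k : ℚ) - 1) * ((2 * k - 1).choose k : ℚ) = catalan (k - 1) := by
  obtain ⟨m, rfl⟩ : ∃ m, k = m + 1 := ⟨k - 1, by omega⟩
  rw [show 2 * (m + 1) - 1 = 2 * m + 1 by omega, choose_two_mul_add_one_succ_eq_mul_catalan]
  push_cast
  rw [show 2 * ((m : ℚ) + 1) - 1 = 2 * m + 1 by ring]
  field_simp

theorem summand_eq_catalan_mul_catalan (n j : ℕ) (hj : 1 ≤ j) (hjn : j ≤ n) :
    (1 / (2 * (j : ℚ) - 1)) * ((2 * j - 1).choose j : ℚ) *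
        (1 / (2 * (n : ℚ) + 1 - 2 * j)) * ((2 * n + 1 - 2 * j).choose (n + 1 - j) : ℚ)
      = catalan (j - 1) * catalan (n - j) := by
  have h := one_div_mul_choose_eq_catalan (n + 1 - j) (by omega)
  rw [show 2 * (n + 1 - j) - 1 = 2 * n + 1 - 2 * j by omega, show n + 1 - j - 1 = n - j by omega,
    Nat.cast_sub (by omega : j ≤ n + 1)] at h
  push_cast at h
  rw [mul_assoc _ (1 / _), ← h, one_div_mul_choose_eq_catalan j hj]
  ring_nf

theorem combinatorial_identity (n r : ℕ) (hr : 1 ≤ r) (hrn : r ≤ n) :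
    (1 / 2 ^ (2 * n) : ℚ) *
        ∑ j ∈ Finset.Icc 1 r,
          (1 / (2 * (j : ℚ) - 1)) * ((2 * j - 1).choose j : ℚ) *
            (1 / (2 * (n : ℚ) + 1 - 2 * j)) * ((2 * n + 1 - 2 * j).choose (n + 1 - j) : ℚ)
      = (1 / 2 ^ (2 * n + 1)) * ((2 * n).choose n : ℚ) * (1 / ((n : ℚ) + 1)) *
          (1 + ((2 * (r : ℚ) - n) / n) *
            (((2 * r).choose r : ℚ) * ((2 * n - 2 * r).choose (n - r) : ℚ) /
              ((2 * n).choose n : ℚ))) := by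
  obtain ⟨m, rfl⟩ : ∃ m, n = m + 1 := ⟨n - 1, by omega⟩
  have hsum : ∑ j ∈ Icc 1 r, (catalan (j - 1) * catalan (m + 1 - j) : ℚ)
      = ∑ i ∈ range r, (catalan i * catalan (m - i) : ℚ) := by
    rw [range_eq_Ico, ← sum_Ico_add_right_sub_eq (c := 1), zero_add, Ico_add_one_right_eq_Icc]
    exact sum_congr rfl fun j hj ↦ by rw [show m + 1 - j = m - (j - 1) by grind]
  have hconv := congrArg (Int.cast : ℤ → ℚ) (mul_sum_range_catalan_mul_catalan m r hrn)
  push_cast at hconv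
  rw [sum_congr rfl fun j hj ↦ summand_eq_catalan_mul_catalan (m + 1) j
      (mem_Icc.1 hj).1 ((mem_Icc.1 hj).2.trans hrn), hsum, ← centralBinom_eq_two_mul_choose,
    ← centralBinom_eq_two_mul_choose, show 2 * (m + 1) - 2 * r = 2 * (m + 1 - r) by omega,
    ← centralBinom_eq_two_mul_choose]
  have hc : (centralBinom (m + 1) : ℚ) ≠ 0 := by exact_mod_cast (centralBinom_pos _).ne'
  field_simp
  push_cast
  linear_combination (2 : ℚ) ^ (2 * (m + 1)) * hconv
end

section
/- As N → ∞, the Riemann sums (1/N)·Σ_{N/2 < n < N} 1/((n/N)^{3/2}·(1 - n/N)^{1/2}) converge to ∫_{1/2}^{1} v^{-3/2}(1-v)^{-1/2} dv = 2; equivalently, N·Σ_{N/2 < n < N} 1/(n^{3/2}(N-n)^{1/2}) → 2. -/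
/-!
The summand is `g (n / N) / N` with `g v = v ^ (-3/2) * (1 - v) ^ (-1/2)`, which has the primitive
`G v = -2 √(1 - v) / √v` and, since `v³ (1 - v)` increases up to `3/4` and decreases after, is
decreasing on `(0, 3/4]` and increasing on `[3/4, 1)`. On each monotone piece the Riemann sum and
the integral differ by at most one boundary term, so the sum over `N/2 < n < N` is squeezed between
integrals of `g` that tend to `G 1 - G (1/2) = 2` and the same plus `g (1/2) / N + g (1 - 1/N) / N`,
and the last term is of order `N ^ (-1/2)`.
-/

open Real Filter Topology Set Finset

theorem integral_add_integral_le_sum_Icc_of_antitoneOn_monotoneOn {f : ℝ → ℝ} {a c b : ℕ}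
    (hac : a ≤ c) (hcb : c + 1 ≤ b) (hanti : AntitoneOn f (Icc a c))
    (hmono : MonotoneOn f (Icc ((c + 1 : ℕ) : ℝ) b)) (hc : 0 ≤ f c) (hc' : 0 ≤ f (c + 1 : ℕ)) :
    (∫ x in a..c, f x) + (∫ x in (c + 1 : ℕ)..b, f x) ≤ ∑ n ∈ Icc a b, f n := by
  have hsplit : ∑ n ∈ Icc a b, f n
      = ∑ n ∈ Ico a c, f n + f c + f (c + 1 : ℕ) + ∑ n ∈ Ico (c + 1) b, f (n + 1 : ℕ) := by
    rw [← Finset.Ico_add_one_right_eq_Icc,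
      ← Finset.sum_Ico_consecutive _ hac (by omega : c ≤ b + 1),
      Finset.sum_eq_sum_Ico_succ_bot (by omega : c < b + 1),
      Finset.sum_eq_sum_Ico_succ_bot (by omega : c + 1 < b + 1),
      Finset.sum_Ico_add' (fun n : ℕ => f n) (c + 1) b 1]
    ring
  rw [hsplit]
  have h1 := hanti.integral_le_sum_Ico hac
  have h2 := hmono.integral_le_sum_Ico hcb
  linarith

theorem sum_Icc_le_integral_add_integral_of_antitoneOn_monotoneOn {f : ℝ → ℝ} {a c b : ℕ}
    (hac : a ≤ c) (hcb : c + 1 ≤ b) (hanti : AntitoneOn f (Icc a c))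
    (hmono : MonotoneOn f (Icc ((c + 1 : ℕ) : ℝ) b)) :
    ∑ n ∈ Icc a b, f n ≤ (∫ x in a..c, f x) + (∫ x in (c + 1 : ℕ)..b, f x) + f a + f b := by
  have hsplit : ∑ n ∈ Icc a b, f n
      = f a + ∑ n ∈ Ico a c, f (n + 1 : ℕ) + ∑ n ∈ Ico (c + 1) b, f n + f b := by
    rw [← Finset.Ico_add_one_right_eq_Icc, Finset.sum_eq_sum_Ico_succ_bot (by omega : a < b + 1),
      Finset.sum_Ico_succ_top (by omega : a + 1 ≤ b),
      ← Finset.sum_Ico_consecutive _ (by omega : a + 1 ≤ c + 1) (by omega : c + 1 ≤ b),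
      Finset.sum_Ico_add' (fun n : ℕ => f n) a c 1]
    ring
  rw [hsplit]
  have h1 := hanti.sum_le_integral_Ico hac
  have h2 := hmono.sum_le_integral_Ico hcb
  linarith

theorem abs_natCast_div_sub_le (m d : ℕ) : |((m / d : ℕ) : ℝ) - m / d| ≤ 1 := by
  rw [abs_sub_le_iff, ← Nat.floor_div_eq_div (K := ℝ)]
  constructor
  · linarith [Nat.floor_le (R := ℝ) (a := m / d) (by positivity)]
  · linarith [Nat.lt_floor_add_one ((m : ℝ) / d)]

theorem tendsto_div_natCast_of_abs_sub_le {u : ℕ → ℝ} {α C : ℝ}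
    (h : ∀ N : ℕ, |u N - α * N| ≤ C) : Tendsto (fun N : ℕ => u N / N) atTop (𝓝 α) := by
  have hdev : Tendsto (fun N : ℕ => (u N - α * N) / N) atTop (𝓝 0) := by
    refine squeeze_zero_norm (fun N => ?_) (tendsto_const_div_atTop_nhds_zero_nat C)
    rw [norm_div, Real.norm_natCast]
    exact div_le_div_of_nonneg_right (h N) (Nat.cast_nonneg _)
  refine (by simpa using hdev.const_add α : Tendsto _ atTop (𝓝 α)).congr' ?_
  filter_upwards [eventually_ne_atTop 0] with N hN
  field_simp
  ring

theorem tendsto_natCast_mul_div_add_div (m d j : ℕ) :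
    Tendsto (fun N : ℕ => ((m * N / d + j : ℕ) : ℝ) / N) atTop (𝓝 (m / d)) := by
  refine tendsto_div_natCast_of_abs_sub_le (C := 1 + j) fun N => ?_
  have := abs_natCast_div_sub_le (m * N) d
  rw [abs_le] at this ⊢
  push_cast at this ⊢
  constructor <;> linarith [show (m : ℝ) * N / d = m / d * N by ring]

theorem tendsto_natCast_sub_one_div : Tendsto (fun N : ℕ => ((N - 1 : ℕ) : ℝ) / N) atTop (𝓝 1) := by
  refine tendsto_div_natCast_of_abs_sub_le (C := 1) fun N => ?_
  rcases N with _ | N <;> simp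

theorem pow_three_mul_one_sub_le_of_le {u v : ℝ} (hu : 0 ≤ u) (huv : u ≤ v) (hv : v ≤ 3 / 4) :
    u ^ 3 * (1 - u) ≤ v ^ 3 * (1 - v) := by
  -- `4 (v³(1-v) - u³(1-u)) = (v-u) ((3-4u)u² + (3-4v)v² + 2(3-2u-2v)uv + (u-v)²)`
  have h1 : 0 ≤ (v - u) * ((3 - 4 * u) * u ^ 2) := by apply mul_nonneg <;> nlinarith
  have h2 : 0 ≤ (v - u) * ((3 - 4 * v) * v ^ 2) := by apply mul_nonneg <;> nlinarith
  have h3 : 0 ≤ (v - u) * ((3 - 2 * u - 2 * v) * (u * v)) := by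
    apply mul_nonneg (by linarith); apply mul_nonneg (by linarith); nlinarith
  have h4 : 0 ≤ (v - u) * (u - v) ^ 2 := by apply mul_nonneg <;> nlinarith
  nlinarith

theorem pow_three_mul_one_sub_le_of_ge {u v : ℝ} (hu : 3 / 4 ≤ u) (huv : u ≤ v) (hv : v ≤ 1) :
    v ^ 3 * (1 - v) ≤ u ^ 3 * (1 - u) := by
  have h1 : 0 ≤ (v - u) * ((4 * u - 3) * u ^ 2) := by apply mul_nonneg <;> nlinarith
  have h2 : 0 ≤ (v - u) * ((4 * v - 3) * v ^ 2) := by apply mul_nonneg <;> nlinarith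
  have h3 : 0 ≤ (v - u) * ((2 * u + 2 * v - 3) * (u * v - 9 / 16)) := by
    apply mul_nonneg (by linarith); apply mul_nonneg (by linarith); nlinarith
  have h4 : 0 ≤ (v - u) * ((u + v - 3 / 2) * (2 - u - v)) := by
    apply mul_nonneg (by linarith); apply mul_nonneg (by linarith); nlinarith
  nlinarith

namespace RiemannSum

noncomputable def integrand (v : ℝ) : ℝ := 1 / (v * √v * √(1 - v))

noncomputable def primitive (v : ℝ) : ℝ := -2 * √(1 - v) / √v

theorem integrand_nonneg (v : ℝ) : 0 ≤ integrand v := by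
  rcases le_or_gt 0 v with hv | hv
  · unfold integrand; positivity
  · simp [integrand, sqrt_eq_zero'.2 hv.le]

theorem hasDerivAt_primitive {v : ℝ} (h0 : 0 < v) (h1 : v < 1) :
    HasDerivAt primitive (integrand v) v := by
  have hs : 0 < √v := sqrt_pos.2 h0
  have hsub : HasDerivAt (fun v => √(1 - v)) (-1 / (2 * √(1 - v))) v := by
    simpa using ((hasDerivAt_id v).const_sub 1).sqrt (by simp; linarith)
  refine ((hsub.const_mul (-2)).div (hasDerivAt_sqrt h0.ne') hs.ne').congr_deriv ?_
  rw [integrand]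
  field_simp
  rw [sq_sqrt h0.le, sq_sqrt (by linarith)]
  ring

theorem continuousOn_integrand : ContinuousOn integrand (Ioo 0 1) := by
  refine continuousOn_const.div (by fun_prop) fun v hv => ?_
  have hs : 0 < √v := sqrt_pos.2 hv.1
  have hs' : 0 < √(1 - v) := sqrt_pos.2 (sub_pos.2 hv.2)
  exact (mul_pos (mul_pos hv.1 hs) hs').ne'

theorem integral_integrand {a b : ℝ} (ha : 0 < a) (hab : a ≤ b) (hb : b < 1) :
    ∫ v in a..b, integrand v = primitive b - primitive a := by
  have hsub : uIcc a b ⊆ Ioo 0 1 := by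
    rw [uIcc_of_le hab]; exact Icc_subset_Ioo ha hb
  refine intervalIntegral.integral_eq_sub_of_hasDerivAt
    (fun v hv => hasDerivAt_primitive (hsub hv).1 (hsub hv).2) ?_
  exact (continuousOn_integrand.mono hsub).intervalIntegrable

theorem continuousAt_primitive {v : ℝ} (hv : 0 < v) : ContinuousAt primitive v := by
  unfold primitive
  exact ContinuousAt.div (by fun_prop) (by fun_prop) (sqrt_pos.2 hv).ne'

theorem primitive_one_half : primitive (1 / 2) = -2 := by
  rw [primitive]; norm_num

theorem primitive_one : primitive 1 = 0 := by simp [primitive]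

theorem mul_integrand_one_sub {ε : ℝ} (hε : 0 < ε) :
    ε * integrand (1 - ε) = √ε / ((1 - ε) * √(1 - ε)) := by
  have : √ε ≠ 0 := by positivity
  rw [integrand, sub_sub_cancel]
  field_simp
  rw [sq_sqrt hε.le]

theorem tendsto_mul_integrand_one_sub :
    Tendsto (fun ε => ε * integrand (1 - ε)) (𝓝[>] 0) (𝓝 0) := by
  have hcont : ContinuousAt (fun ε : ℝ => √ε / ((1 - ε) * √(1 - ε))) 0 :=
    ContinuousAt.div (by fun_prop) (by fun_prop) (by norm_num)
  have := hcont.tendsto.mono_left (nhdsWithin_le_nhds (s := Ioi 0))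
  simp only [sqrt_zero, zero_div] at this
  exact this.congr' (eventually_nhdsWithin_of_forall fun ε hε => (mul_integrand_one_sub hε).symm)

theorem integrand_eq_inv_sqrt {v : ℝ} (hv : 0 ≤ v) : integrand v = (√(v ^ 3 * (1 - v)))⁻¹ := by
  rw [integrand, one_div, sqrt_mul (by positivity), show v ^ 3 = v ^ 2 * v by ring,
    sqrt_mul (by positivity), sqrt_sq hv]

theorem antitoneOn_integrand : AntitoneOn integrand (Ioc 0 (3 / 4)) := by
  rintro u ⟨hu, -⟩ v ⟨-, hv⟩ huv
  have hv0 : 0 < v := hu.trans_le huv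
  rw [integrand_eq_inv_sqrt hu.le, integrand_eq_inv_sqrt hv0.le]
  exact inv_anti₀ (sqrt_pos.2 (mul_pos (by positivity) (by linarith)))
    (sqrt_le_sqrt (pow_three_mul_one_sub_le_of_le hu.le huv hv))

theorem monotoneOn_integrand : MonotoneOn integrand (Ico (3 / 4) 1) := by
  rintro u ⟨hu, -⟩ v ⟨-, hv⟩ huv
  have hv0 : 0 < v := by linarith
  rw [integrand_eq_inv_sqrt (by linarith), integrand_eq_inv_sqrt hv0.le]
  exact inv_anti₀ (sqrt_pos.2 (mul_pos (by positivity) (by linarith)))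
    (sqrt_le_sqrt (pow_three_mul_one_sub_le_of_ge hu huv hv.le))

noncomputable def scaledIntegrand (N : ℕ) (t : ℝ) : ℝ := integrand (t / N) / N

theorem natCast_mul_one_div_eq_scaledIntegrand {N : ℕ} (hN : 0 < N) (t : ℝ) :
    (N : ℝ) * (1 / (t * √t * √(N - t))) = scaledIntegrand N t := by
  have hN' : (0 : ℝ) < N := Nat.cast_pos.2 hN
  have hsN : √(N : ℝ) ≠ 0 := (sqrt_pos.2 hN').ne'
  have hsub : 1 - t / N = (N - t) / N := by field_simp
  rw [scaledIntegrand, integrand, hsub, sqrt_div' _ hN'.le, sqrt_div' _ hN'.le]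
  rw [div_mul_div_comm, div_mul_div_comm, one_div_div, div_div, mul_assoc (N : ℝ),
    mul_self_sqrt hN'.le, mul_div_mul_right _ _ hN'.ne', mul_one_div]

theorem integral_scaledIntegrand {N : ℕ} {x y : ℝ} (hx : 0 < x) (hxy : x ≤ y) (hy : y < N) :
    ∫ t in x..y, scaledIntegrand N t = primitive (y / N) - primitive (x / N) := by
  have hN : (0 : ℝ) < N := hx.trans_le hxy |>.trans hy
  simp only [scaledIntegrand, intervalIntegral.integral_div,
    intervalIntegral.integral_comp_div _ hN.ne', smul_eq_mul]
  rw [mul_div_cancel_left₀ _ hN.ne']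
  exact integral_integrand (by positivity) (by gcongr) ((div_lt_one hN).2 hy)

theorem antitoneOn_scaledIntegrand {N : ℕ} {x y : ℝ} (hx : 0 < x) (hy : y ≤ 3 / 4 * N) :
    AntitoneOn (scaledIntegrand N) (Icc x y) := by
  rintro s ⟨hs, hs'⟩ t ⟨ht, ht'⟩ hst
  have hN : (0 : ℝ) < N := by linarith
  refine div_le_div_of_nonneg_right (antitoneOn_integrand ⟨div_pos (by linarith) hN, ?_⟩
    ⟨div_pos (by linarith) hN, ?_⟩ (by gcongr)) hN.le
  all_goals rw [div_le_iff₀ hN]; linarith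

theorem monotoneOn_scaledIntegrand {N : ℕ} {x y : ℝ} (hx : 3 / 4 * N ≤ x) (hy : y < N) :
    MonotoneOn (scaledIntegrand N) (Icc x y) := by
  rintro s ⟨hs, hs'⟩ t ⟨ht, ht'⟩ hst
  have hN : (0 : ℝ) < N := by linarith
  refine div_le_div_of_nonneg_right (monotoneOn_integrand ⟨?_, ?_⟩ ⟨?_, ?_⟩ (by gcongr)) hN.le
  all_goals first | rw [le_div_iff₀ hN] | rw [div_lt_one hN]
  all_goals linarith

theorem natCast_three_mul_div_four_le (N : ℕ) : ((3 * N / 4 : ℕ) : ℝ) ≤ 3 / 4 * N := by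
  have : ((3 * N / 4 : ℕ) : ℝ) ≤ ((3 * N : ℕ) : ℝ) / (4 : ℕ) := Nat.cast_div_le
  push_cast at this; linarith

theorem le_natCast_three_mul_div_four_add_one (N : ℕ) : 3 / 4 * N ≤ ((3 * N / 4 + 1 : ℕ) : ℝ) := by
  have := abs_natCast_div_sub_le (3 * N) 4
  rw [abs_le] at this
  push_cast at this ⊢; linarith

/-- The minimum of `scaledIntegrand N` is at `3N/4`, inside the omitted unit interval
`[⌊3N/4⌋, ⌊3N/4⌋ + 1]`. -/
noncomputable def gappedIntegral (N : ℕ) : ℝ :=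
  (∫ t in ((N / 2 + 1 : ℕ) : ℝ)..((3 * N / 4 : ℕ) : ℝ), scaledIntegrand N t) +
    ∫ t in ((3 * N / 4 + 1 : ℕ) : ℝ)..((N - 1 : ℕ) : ℝ), scaledIntegrand N t

theorem tendsto_gappedIntegral : Tendsto gappedIntegral atTop (𝓝 2) := by
  have hlim : ∀ {b : ℕ → ℕ} {β : ℝ}, 0 < β → Tendsto (fun N : ℕ => (b N : ℝ) / N) atTop (𝓝 β) →
      Tendsto (fun N : ℕ => primitive (b N / N)) atTop (𝓝 (primitive β)) :=
    fun hβ hb => (continuousAt_primitive hβ).tendsto.comp hb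
  have h := ((hlim (by norm_num) (tendsto_natCast_mul_div_add_div 3 4 0)).sub
    (hlim (b := fun N => N / 2 + 1) (β := 1 / 2) (by norm_num)
      (by simpa using tendsto_natCast_mul_div_add_div 1 2 1))).add
    ((hlim one_pos tendsto_natCast_sub_one_div).sub
      (hlim (by norm_num) (tendsto_natCast_mul_div_add_div 3 4 1)))
  rw [primitive_one_half, primitive_one, show ∀ p : ℝ, p - -2 + (0 - p) = 2 by intro; ring] at h
  refine h.congr' ?_
  filter_upwards [eventually_ge_atTop 5] with N hN
  rw [gappedIntegral, integral_scaledIntegrand (by positivity) (Nat.cast_le.2 (by omega))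
      (Nat.cast_lt.2 (by omega)),
    integral_scaledIntegrand (by positivity) (Nat.cast_le.2 (by omega)) (Nat.cast_lt.2 (by omega)),
    add_zero]

theorem scaledIntegrand_nonneg (N : ℕ) (t : ℝ) : 0 ≤ scaledIntegrand N t :=
  div_nonneg (integrand_nonneg _) N.cast_nonneg

theorem gappedIntegral_le_sum {N : ℕ} (hN : 5 ≤ N) :
    gappedIntegral N ≤ ∑ n ∈ Icc (N / 2 + 1) (N - 1), scaledIntegrand N n :=
  integral_add_integral_le_sum_Icc_of_antitoneOn_monotoneOn (by omega) (by omega)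
    (antitoneOn_scaledIntegrand (by positivity) (natCast_three_mul_div_four_le N))
    (monotoneOn_scaledIntegrand (le_natCast_three_mul_div_four_add_one N)
      (Nat.cast_lt.2 (by omega)))
    (scaledIntegrand_nonneg _ _) (scaledIntegrand_nonneg _ _)

theorem sum_le_gappedIntegral_add {N : ℕ} (hN : 5 ≤ N) :
    ∑ n ∈ Icc (N / 2 + 1) (N - 1), scaledIntegrand N n ≤
      gappedIntegral N + scaledIntegrand N (N / 2 + 1 : ℕ) + scaledIntegrand N (N - 1 : ℕ) :=
  sum_Icc_le_integral_add_integral_of_antitoneOn_monotoneOn (by omega) (by omega)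
    (antitoneOn_scaledIntegrand (by positivity) (natCast_three_mul_div_four_le N))
    (monotoneOn_scaledIntegrand (le_natCast_three_mul_div_four_add_one N)
      (Nat.cast_lt.2 (by omega)))

theorem tendsto_scaledIntegrand_div_two_add_one :
    Tendsto (fun N : ℕ => scaledIntegrand N (N / 2 + 1 : ℕ)) atTop (𝓝 0) := by
  have hc : ContinuousAt integrand (1 / 2) :=
    continuousOn_integrand.continuousAt (Ioo_mem_nhds (by norm_num) (by norm_num))
  have hpos : Tendsto (fun N : ℕ => ((N / 2 + 1 : ℕ) : ℝ) / N) atTop (𝓝 (1 / 2)) := by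
    simpa using tendsto_natCast_mul_div_add_div 1 2 1
  exact (hc.tendsto.comp hpos).div_atTop tendsto_natCast_atTop_atTop

theorem tendsto_scaledIntegrand_sub_one :
    Tendsto (fun N : ℕ => scaledIntegrand N (N - 1 : ℕ)) atTop (𝓝 0) := by
  refine (tendsto_mul_integrand_one_sub.comp
    (tendsto_inv_atTop_nhdsGT_zero.comp tendsto_natCast_atTop_atTop)).congr' ?_
  filter_upwards [eventually_ge_atTop 1] with N hN
  have hN' : (N : ℝ) ≠ 0 := by positivity
  simp only [Function.comp_apply, scaledIntegrand, Nat.cast_sub hN, Nat.cast_one]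
  rw [sub_div, div_self hN', one_div, inv_mul_eq_div]

end RiemannSum

open RiemannSum in
theorem riemann_sum_tendsto_two :
    Filter.Tendsto
      (fun N : ℕ => (N : ℝ) *
        ∑ n ∈ (Finset.range N).filter (fun n => N < 2 * n),
          1 / ((n : ℝ) * Real.sqrt n * Real.sqrt ((N : ℝ) - n)))
      Filter.atTop (nhds 2) := by
  have hsum : ∀ᶠ N : ℕ in atTop, ∑ n ∈ Icc (N / 2 + 1) (N - 1), scaledIntegrand N n =
      (N : ℝ) * ∑ n ∈ (Finset.range N).filter (fun n => N < 2 * n),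
        1 / ((n : ℝ) * Real.sqrt n * Real.sqrt ((N : ℝ) - n)) := by
    filter_upwards [eventually_gt_atTop 0] with N hN
    have hrange :
        (Finset.range N).filter (fun n => N < 2 * n) = Finset.Icc (N / 2 + 1) (N - 1) := by
      ext n; simp only [Finset.mem_filter, Finset.mem_range, Finset.mem_Icc]; omega
    simp only [hrange, mul_sum, natCast_mul_one_div_eq_scaledIntegrand hN]
  have hupper := (tendsto_gappedIntegral.add tendsto_scaledIntegrand_div_two_add_one).add
    tendsto_scaledIntegrand_sub_one
  rw [add_zero, add_zero] at hupper
  refine (tendsto_of_tendsto_of_tendsto_of_le_of_le' tendsto_gappedIntegral hupper ?_ ?_).congr'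
    hsum
  · filter_upwards [eventually_ge_atTop 5] with N hN using gappedIntegral_le_sum hN
  · filter_upwards [eventually_ge_atTop 5] with N hN using sum_le_gappedIntegral_add hN
end
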